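/- arXiv:2009.10965 — 2 statements merged into one kernel-verified Lean document; each statement's English description precedes it below -/
import Mathlib

section
/- Let n, t, k be positive integers with n ≥ 3t+1. Let G be a graph on vertex set P with |P| = n - t, let i* ∈ P be a fixed vertex, and let C ⊆ P \ {i*} be a set of vertices such that (i) every vertex in C is adjacent to i*, (ii) every vertex in C has degree at least n - 2t (counting a self-loop as an edge), and (iii) |C| ≥ n - 2t - 1. Define D = { i ∈ P \ {i*} : i has at least k neighbors in C }, where k = ⌊t/5⌋ + 1. Then |D| ≥ n - 9t/4 - 1. -/
set_option maxHeartbeats 1000000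

/-- Graph lemma (Lemma 4 of the paper). `V` is the vertex set `P` with
`|P| = n - t`; `E` is a symmetric adjacency relation (self-loops allowed); every vertex
of `C` is adjacent to `i*` and has degree at least `n - 2t`; `|C| ≥ n - 2t - 1`.
With `k = ⌊t/5⌋ + 1`, the set `D` of vertices `≠ i*` having at least `k` neighbours in
`C` satisfies `|D| ≥ n - 9t/4 - 1` (over `ℚ`). -/
theorem stmt_0 (n t k : ℕ) (ht : 0 < t) (hn : 3 * t + 1 ≤ n) (hk : k = t / 5 + 1)
    (V : Type) [Fintype V] [DecidableEq V]
    (E : V → V → Prop) [DecidableRel E] (hsymm : ∀ i j, E i j → E j i)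
    (hcard : Fintype.card V = n - t)
    (istar : V) (C : Finset V) (histar : istar ∉ C)
    (hCadj : ∀ i ∈ C, E i istar)
    (hCdeg : ∀ i ∈ C, n - 2 * t ≤ (Finset.univ.filter (fun j => E i j)).card)
    (hCcard : n - 2 * t - 1 ≤ C.card)
    (D : Finset V)
    (hD : D = Finset.univ.filter
      (fun i => i ≠ istar ∧ k ≤ (C.filter (fun j => E i j)).card)) :
    (n : ℚ) - 9 * t / 4 - 1 ≤ (D.card : ℚ) := by
  classical
  set q := t / 5 with hq
  have hq5 : 5 * q ≤ t := by omega
  by_cases hcase : n - 2 * t - 1 ≤ D.card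
  · have h1 : n ≤ D.card + 2 * t + 1 := by omega
    have h1' : (n : ℚ) ≤ D.card + 2 * t + 1 := by exact_mod_cast h1
    have ht' : (0 : ℚ) ≤ t := by positivity
    linarith
  · push_neg at hcase
    set d := D.card with hd
    set x := n - 2 * t - 1 - d with hx
    have hx1 : 1 ≤ x := by omega
    have histarD : istar ∉ D := by
      rw [hD]; simp
    set T : Finset V := insert istar D with hT
    have hTcard : T.card = d + 1 := by
      rw [hT, Finset.card_insert_of_notMem histarD]
    -- degree split
    have hsplit : ∀ (p : V → Prop) [DecidablePred p],
        (Finset.univ.filter p).card = (T.filter p).card + (Tᶜ.filter p).card := by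
      intro p _
      rw [← Finset.card_union_of_disjoint
        (Finset.disjoint_filter_filter disjoint_compl_right),
        ← Finset.filter_union, Finset.union_compl]
    -- lower bound on sum of degrees
    have hlow : C.card * (n - 2 * t) ≤ ∑ c ∈ C, (Finset.univ.filter (fun j => E c j)).card := by
      calc C.card * (n - 2*t) = ∑ _c ∈ C, (n - 2*t) := by rw [Finset.sum_const, smul_eq_mul]
        _ ≤ _ := Finset.sum_le_sum (fun c hc => hCdeg c hc)
    have hsum : ∑ c ∈ C, (Finset.univ.filter (fun j => E c j)).card
        = ∑ c ∈ C, (T.filter (fun j => E c j)).card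
          + ∑ c ∈ C, (Tᶜ.filter (fun j => E c j)).card := by
      rw [← Finset.sum_add_distrib]
      exact Finset.sum_congr rfl (fun c _ => hsplit _)
    have hbT : ∑ c ∈ C, (T.filter (fun j => E c j)).card ≤ C.card * (d + 1) := by
      calc ∑ c ∈ C, (T.filter (fun j => E c j)).card ≤ ∑ _c ∈ C, T.card :=
            Finset.sum_le_sum (fun c _ => Finset.card_filter_le _ _)
        _ = C.card * (d + 1) := by rw [Finset.sum_const, smul_eq_mul, hTcard]
    have hswap : ∑ c ∈ C, (Tᶜ.filter (fun j => E c j)).card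
        = ∑ j ∈ Tᶜ, (C.filter (fun c => E c j)).card := by
      simp only [Finset.card_filter]
      rw [Finset.sum_comm]
    have hbTc : ∑ j ∈ Tᶜ, (C.filter (fun c => E c j)).card ≤ Tᶜ.card * q := by
      calc ∑ j ∈ Tᶜ, (C.filter (fun c => E c j)).card ≤ ∑ _j ∈ Tᶜ, q := by
            apply Finset.sum_le_sum
            intro j hj
            simp only [Finset.mem_compl, hT, Finset.mem_insert, not_or] at hj
            obtain ⟨hj1, hj2⟩ := hj
            rw [hD] at hj2
            simp only [Finset.mem_filter, Finset.mem_univ, true_and, not_and, not_le] at hj2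
            have := hj2 hj1
            have heq : C.filter (fun c => E c j) = C.filter (fun c => E j c) :=
              Finset.filter_congr (fun c _ => ⟨fun h => hsymm _ _ h, fun h => hsymm _ _ h⟩)
            rw [heq]
            omega
        _ = Tᶜ.card * q := by rw [Finset.sum_const, smul_eq_mul]
    have hTc : Tᶜ.card = n - t - (d + 1) := by
      rw [Finset.card_compl, hTcard, hcard]
    have hdn : d + 1 ≤ n - t := by
      have : T ⊆ Finset.univ := Finset.subset_univ _
      have := Finset.card_le_card this
      rw [hTcard, Finset.card_univ, hcard] at this
      exact this
    have main : C.card * (n - 2 * t) ≤ C.card * (d + 1) + (n - t - (d + 1)) * q := by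
      have h2 : ∑ c ∈ C, (Tᶜ.filter (fun j => E c j)).card ≤ (n - t - (d + 1)) * q := by
        rw [hswap, ← hTc]; exact hbTc
      calc C.card * (n - 2 * t) ≤ _ := hlow
        _ = _ + _ := hsum
        _ ≤ _ := Nat.add_le_add hbT h2
    have e1 : n - 2 * t = d + 1 + x := by omega
    have e2 : n - t - (d + 1) = x + t := by omega
    rw [e1, e2] at main
    have hmx : C.card * x ≤ (x + t) * q := by
      rwa [Nat.mul_add, Nat.add_le_add_iff_left] at main
    have htm : t ≤ C.card := by omega
    have htx : t * x ≤ (x + t) * q := le_trans (Nat.mul_le_mul_right x htm) hmx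
    clear_value q d x
    clear hD hsplit hlow hsum hbT hswap hbTc hTc main hmx hT hTcard T
    -- move to ℤ
    have htx' : (t : ℤ) * x ≤ (x + t) * q := by exact_mod_cast htx
    have hq5' : (5 : ℤ) * q ≤ t := by exact_mod_cast hq5
    have hx1' : (1 : ℤ) ≤ x := by exact_mod_cast hx1
    have ht0 : (0 : ℤ) ≤ t := by positivity
    have hqt : (q : ℤ) < t := by
      have : q < t := by omega
      exact_mod_cast this
    have k1 : 4 * (x : ℤ) * ((t : ℤ) - q) ≤ 4 * ((t : ℤ) * q) := by nlinarith [htx']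
    have k2 : 4 * ((t : ℤ) * q) ≤ (t : ℤ) * ((t : ℤ) - q) := by nlinarith [mul_le_mul_of_nonneg_left hq5' ht0]
    have k3 : (4 * (x : ℤ)) * ((t : ℤ) - q) ≤ (t : ℤ) * ((t : ℤ) - q) := le_trans k1 k2
    have h4x' : 4 * (x : ℤ) ≤ (t : ℤ) := le_of_mul_le_mul_right k3 (by linarith)
    have h4x : 4 * x ≤ t := by exact_mod_cast h4x'
    have hsum2 : d + x + 2 * t + 1 = n := by omega
    have hc : (d : ℚ) + x + 2 * t + 1 = n := by exact_mod_cast hsum2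
    have h4xQ : 4 * (x : ℚ) ≤ t := by exact_mod_cast h4x
    linarith
end

section
/- Let m_e be the total number of edges between a set C and a set Q of vertices in a bipartite-like incidence structure, where |Q| = n - t - 1, every vertex of Q has at most |C| edges to C, and m_e ≥ |C|(n - 2t - 1). Suppose k ≤ t/5 + 1, |C| ≥ n - 2t - 1, and n ≥ 3t + 1. Let D ⊆ Q be the set of vertices of Q with at least k edges to C. Then |D| ≥ n - 2t - 1 - t/4 (over the rationals). -/
/-- Extremal counting step in the graph lemma. `α` plays the role of the
set `C`, `β` the set `Q` with `|Q| = n - t - 1`; `R c q` means there is an edge between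
`c ∈ C` and `q ∈ Q`. If the total number of edges is at least `|C|·(n - 2t - 1)`,
`k ≤ t/5 + 1`, `|C| ≥ n - 2t - 1` and `n ≥ 3t + 1`, then the set `D ⊆ Q` of vertices
with at least `k` edges to `C` satisfies `|D| ≥ n - 2t - 1 - t/4` over `ℚ`. -/
theorem stmt_1 (n t k : ℕ) (α β : Type) [Fintype α] [Fintype β]
    [DecidableEq α] [DecidableEq β]
    (R : α → β → Prop) [∀ c q, Decidable (R c q)]
    (hQ : Fintype.card β = n - t - 1)
    (hdeg : ∀ q : β, ((Finset.univ : Finset α).filter (fun c : α => R c q)).card ≤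
      Fintype.card α)
    (hme : Fintype.card α * (n - 2 * t - 1) ≤
      ∑ q : β, ((Finset.univ : Finset α).filter (fun c : α => R c q)).card)
    (hk : (k : ℚ) ≤ (t : ℚ) / 5 + 1) (hkpos : 1 ≤ k)
    (hC : n - 2 * t - 1 ≤ Fintype.card α)
    (hn : 3 * t + 1 ≤ n) (ht : 0 < t)
    (D : Finset β)
    (hD : ∀ q : β, q ∈ D ↔
      k ≤ ((Finset.univ : Finset α).filter (fun c : α => R c q)).card) :
    (n : ℚ) - 2 * t - 1 - (t : ℚ) / 4 ≤ (D.card : ℚ) := by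
  classical
  set d : β → ℕ := fun q => ((Finset.univ : Finset α).filter (fun c : α => R c q)).card with hd
  have hsplit : ∑ q : β, d q = ∑ q ∈ D, d q + ∑ q ∈ Dᶜ, d q :=
    (Finset.sum_add_sum_compl D d).symm
  have h1 : ∑ q ∈ D, d q ≤ D.card * Fintype.card α := by
    calc ∑ q ∈ D, d q ≤ D.card • Fintype.card α :=
          Finset.sum_le_card_nsmul D d _ (fun q _ => hdeg q)
      _ = D.card * Fintype.card α := by rw [smul_eq_mul]
  have h2 : ∑ q ∈ Dᶜ, d q ≤ Dᶜ.card * (k - 1) := by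
    calc ∑ q ∈ Dᶜ, d q ≤ Dᶜ.card • (k - 1) := by
          refine Finset.sum_le_card_nsmul _ d _ (fun q hq => ?_)
          have : ¬ k ≤ d q := by
            simpa [hD q] using (Finset.mem_compl.mp hq)
          omega
      _ = Dᶜ.card * (k - 1) := by rw [smul_eq_mul]
  have hDle : D.card ≤ Fintype.card β := D.card_le_univ
  have hcompl : Dᶜ.card = Fintype.card β - D.card := Finset.card_compl D
  -- main nat inequality
  have hmain : Fintype.card α * (n - 2 * t - 1) ≤
      D.card * Fintype.card α + (Fintype.card β - D.card) * (k - 1) := by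
    calc Fintype.card α * (n - 2 * t - 1) ≤ ∑ q : β, d q := hme
      _ = ∑ q ∈ D, d q + ∑ q ∈ Dᶜ, d q := hsplit
      _ ≤ D.card * Fintype.card α + (Fintype.card β - D.card) * (k - 1) := by
          rw [← hcompl]; exact Nat.add_le_add h1 h2
  -- cast to ℚ
  have h2t : 2 * t + 1 ≤ n := by omega
  have hm : ((n - 2 * t - 1 : ℕ) : ℚ) = (n : ℚ) - 2 * t - 1 := by
    have : n - 2 * t - 1 = n - (2 * t + 1) := by omega
    rw [this, Nat.cast_sub h2t]; push_cast; ring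
  have hβ : ((Fintype.card β : ℕ) : ℚ) = (n : ℚ) - t - 1 := by
    rw [hQ]
    have : n - t - 1 = n - (t + 1) := by omega
    rw [this, Nat.cast_sub (by omega)]; push_cast; ring
  have hk1 : ((k - 1 : ℕ) : ℚ) = (k : ℚ) - 1 := by
    rw [Nat.cast_sub hkpos]; push_cast; ring
  have hmainQ : (Fintype.card α : ℚ) * ((n : ℚ) - 2 * t - 1) ≤
      (D.card : ℚ) * (Fintype.card α : ℚ) +
        (((n : ℚ) - t - 1) - (D.card : ℚ)) * ((k : ℚ) - 1) := by
    have := hmain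
    have hcast : ((Fintype.card β - D.card : ℕ) : ℚ)
        = ((n : ℚ) - t - 1) - (D.card : ℚ) := by
      rw [Nat.cast_sub hDle, hβ]
    calc (Fintype.card α : ℚ) * ((n : ℚ) - 2 * t - 1)
        = ((Fintype.card α * (n - 2 * t - 1) : ℕ) : ℚ) := by rw [Nat.cast_mul, hm]
      _ ≤ ((D.card * Fintype.card α + (Fintype.card β - D.card) * (k - 1) : ℕ) : ℚ) := by
          exact_mod_cast this
      _ = (D.card : ℚ) * (Fintype.card α : ℚ) +
            (((n : ℚ) - t - 1) - (D.card : ℚ)) * ((k : ℚ) - 1) := by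
          push_cast [Nat.cast_sub hDle, hβ, hk1]
          ring

  have hCQ : (n : ℚ) - 2 * t - 1 ≤ (Fintype.card α : ℚ) := by
    calc (n : ℚ) - 2 * t - 1 = ((n - 2 * t - 1 : ℕ) : ℚ) := hm.symm
      _ ≤ (Fintype.card α : ℚ) := by exact_mod_cast hC
  have htm : (t : ℚ) ≤ (n : ℚ) - 2 * t - 1 := by
    have : (3 * t + 1 : ℚ) ≤ (n : ℚ) := by exact_mod_cast hn
    linarith
  have htpos : (0 : ℚ) < t := by exact_mod_cast ht
  have hk5 : 5 * ((k : ℚ) - 1) ≤ (t : ℚ) := by linarith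
  have hkge : (1 : ℚ) ≤ (k : ℚ) := by exact_mod_cast hkpos
  have hDnn : (0 : ℚ) ≤ (D.card : ℚ) := Nat.cast_nonneg _
  nlinarith [mul_nonneg (sub_nonneg.mpr hkge) htpos.le,
    mul_pos (show (0:ℚ) < (Fintype.card α : ℚ) - ((k:ℚ)-1) by linarith) htpos,
    mul_le_mul_of_nonneg_right hCQ (le_of_lt htpos)]
end
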